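/- In a finite discounted MDP with discount γ ∈ [0,1), for any two policies π and π', the L¹ distance between their normalized discounted state-visitation distributions satisfies ‖d_{π'} − d_π‖₁ ≤ (2γ/(1−γ)) · E_{s ∼ d_π}[D_TV(π'(·|s), π(·|s))]. -/

import Mathlib

open scoped BigOperators

section MDP

variable {S A : Type*} [Fintype S] [Fintype A]

/-- `P` is a transition kernel: each `P s a` is a probability distribution on states. -/
def IsKernel (P : S → A → S → ℝ) : Prop :=
  (∀ s a s', 0 ≤ P s a s') ∧ ∀ s a, ∑ s', P s a s' = 1

/-- `π` is a policy: each `π s` is a probability distribution on actions. -/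
def IsPolicy (π : S → A → ℝ) : Prop :=
  (∀ s a, 0 ≤ π s a) ∧ ∀ s, ∑ a, π s a = 1

/-- `ρ` is a probability distribution on states. -/
def IsDist (ρ : S → ℝ) : Prop := (∀ s, 0 ≤ ρ s) ∧ ∑ s, ρ s = 1

/-- Total variation distance between finitely supported distributions. -/
noncomputable def dtv {X : Type*} [Fintype X] (p q : X → ℝ) : ℝ := (1 / 2) * ∑ x, |p x - q x|

/-- One-step state transition probability induced by policy `π`. -/
def stepKernel (P : S → A → S → ℝ) (π : S → A → ℝ) (s s' : S) : ℝ :=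
  ∑ a, π s a * P s a s'

/-- Distribution of the state after `t` steps starting from `s`, following `π`. -/
noncomputable def visit [DecidableEq S] (P : S → A → S → ℝ) (π : S → A → ℝ) : ℕ → S → S → ℝ
  | 0, s, s' => if s' = s then 1 else 0
  | (t + 1), s, s' => ∑ s'', visit P π t s s'' * stepKernel P π s'' s'

/-- Expected one-step reward of policy `π` at state `s`. -/
def rewardOf (r : S → A → ℝ) (π : S → A → ℝ) (s : S) : ℝ := ∑ a, π s a * r s a

/-- State value function `V_π`. -/
noncomputable def Vval [DecidableEq S] (P : S → A → S → ℝ) (r : S → A → ℝ) (γ : ℝ) (π : S → A → ℝ)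
    (s : S) : ℝ :=
  ∑' t : ℕ, γ ^ t * ∑ s', visit P π t s s' * rewardOf r π s'

/-- Action value function `Q_π`. -/
noncomputable def Qval [DecidableEq S] (P : S → A → S → ℝ) (r : S → A → ℝ) (γ : ℝ) (π : S → A → ℝ)
    (s : S) (a : A) : ℝ :=
  r s a + γ * ∑ s', P s a s' * Vval P r γ π s'

/-- Advantage function `A_π = Q_π - V_π`. -/
noncomputable def Adv [DecidableEq S] (P : S → A → S → ℝ) (r : S → A → ℝ) (γ : ℝ) (π : S → A → ℝ)
    (s : S) (a : A) : ℝ :=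
  Qval P r γ π s a - Vval P r γ π s

/-- Expected discounted return `J(π)` from initial distribution `ρ₀`. -/
noncomputable def Jval [DecidableEq S] (P : S → A → S → ℝ) (r : S → A → ℝ) (γ : ℝ) (ρ₀ : S → ℝ)
    (π : S → A → ℝ) : ℝ :=
  ∑ s, ρ₀ s * Vval P r γ π s

/-- Normalized discounted state-visitation distribution `d_π`. -/
noncomputable def dvisit [DecidableEq S] (P : S → A → S → ℝ) (γ : ℝ) (ρ₀ : S → ℝ) (π : S → A → ℝ)
    (s : S) : ℝ :=
  (1 - γ) * ∑' t : ℕ, γ ^ t * ∑ s₀, ρ₀ s₀ * visit P π t s₀ s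

end MDP

/-!
Write `d` for the normalized discounted visitation distribution of a policy with state kernel
`K`. Splitting the discounted sum off at time `0` gives the flow equation
`d = (1 - γ) ρ₀ + γ d K`. Subtracting the equations for `π'` and `π`,
`d' - d = γ (d' - d) K' + γ d (K' - K)`. A stochastic matrix does not increase the `ℓ¹` norm,
and row `s` of `K' - K` has `ℓ¹` norm at most `2 D_TV(π'(·|s), π(·|s))`, so
`‖d' - d‖₁ ≤ γ ‖d' - d‖₁ + 2γ E_{s ∼ d}[D_TV]`, which rearranges to the claim.
-/

open Finset

section Stochastic

variable {ι κ : Type*} [Fintype ι] [Fintype κ]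

theorem sum_abs_sum_mul_le {K : ι → κ → ℝ} (hK : ∀ i j, 0 ≤ K i j)
    (hK1 : ∀ i, ∑ j, K i j = 1) (x : ι → ℝ) :
    ∑ j, |∑ i, x i * K i j| ≤ ∑ i, |x i| :=
  calc ∑ j, |∑ i, x i * K i j|
      ≤ ∑ j, ∑ i, |x i| * K i j :=
        sum_le_sum fun j _ => (abs_sum_le_sum_abs _ _).trans_eq <|
          sum_congr rfl fun i _ => by rw [abs_mul, abs_of_nonneg (hK i j)]
    _ = ∑ i, |x i| := by
        rw [sum_comm]
        simp only [← mul_sum, hK1, mul_one]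

theorem sum_abs_sub_le_of_flow {K K' : ι → ι → ℝ} (hK' : ∀ i j, 0 ≤ K' i j)
    (hK'1 : ∀ i, ∑ j, K' i j = 1) {b d d' : ι → ℝ} {γ : ℝ} (hγ : 0 ≤ γ) (hd : ∀ i, 0 ≤ d i)
    (hflow : ∀ j, d j = b j + γ * ∑ i, d i * K i j)
    (hflow' : ∀ j, d' j = b j + γ * ∑ i, d' i * K' i j) :
    ∑ j, |d' j - d j| ≤
      γ * ∑ i, |d' i - d i| + γ * ∑ i, d i * ∑ j, |K' i j - K i j| := by
  have hsplit : ∀ j, d' j - d j =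
      γ * (∑ i, (d' i - d i) * K' i j + ∑ i, d i * (K' i j - K i j)) := by
    intro j
    rw [hflow j, hflow' j]
    simp only [sub_mul, mul_sub, sum_sub_distrib]
    ring
  calc ∑ j, |d' j - d j|
      ≤ ∑ j, γ * (|∑ i, (d' i - d i) * K' i j| + ∑ i, d i * |K' i j - K i j|) := by
        refine sum_le_sum fun j _ => ?_
        rw [hsplit, abs_mul, abs_of_nonneg hγ]
        refine mul_le_mul_of_nonneg_left ((abs_add_le _ _).trans (add_le_add le_rfl ?_)) hγ
        refine (abs_sum_le_sum_abs _ _).trans_eq (sum_congr rfl fun i _ => ?_)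
        rw [abs_mul, abs_of_nonneg (hd i)]
    _ = γ * ∑ j, |∑ i, (d' i - d i) * K' i j| + γ * ∑ i, d i * ∑ j, |K' i j - K i j| := by
        simp only [← mul_sum, sum_add_distrib, mul_add]
        rw [sum_comm]
        simp only [mul_sum]
    _ ≤ γ * ∑ i, |d' i - d i| + γ * ∑ i, d i * ∑ j, |K' i j - K i j| := by
        exact add_le_add (mul_le_mul_of_nonneg_left (sum_abs_sum_mul_le hK' hK'1 _) hγ) le_rfl

end Stochastic

section MDP

variable {S A : Type*} [Fintype S] [Fintype A] {P : S → A → S → ℝ} {π : S → A → ℝ}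

theorem two_mul_dtv {X : Type*} [Fintype X] (p q : X → ℝ) :
    2 * dtv p q = ∑ x, |p x - q x| := by
  unfold dtv
  ring

theorem stepKernel_nonneg (hP : IsKernel P) (hπ : IsPolicy π) (s s' : S) :
    0 ≤ stepKernel P π s s' :=
  sum_nonneg fun a _ => mul_nonneg (hπ.1 s a) (hP.1 s a s')

theorem sum_stepKernel (hP : IsKernel P) (hπ : IsPolicy π) (s : S) :
    ∑ s', stepKernel P π s s' = 1 := by
  unfold stepKernel
  rw [sum_comm]
  simp only [← mul_sum, hP.2, mul_one]
  exact hπ.2 s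

theorem sum_abs_stepKernel_sub_le (hP : IsKernel P) (π π' : S → A → ℝ) (s : S) :
    ∑ s', |stepKernel P π' s s' - stepKernel P π s s'| ≤ 2 * dtv (π' s) (π s) := by
  have hdiff : ∀ s', stepKernel P π' s s' - stepKernel P π s s' =
      ∑ a, (π' s a - π s a) * P s a s' := by
    intro s'
    simp only [stepKernel, sub_mul, sum_sub_distrib]
  simp only [hdiff, two_mul_dtv]
  exact sum_abs_sum_mul_le (hP.1 s) (hP.2 s) _

variable [DecidableEq S] {ρ₀ : S → ℝ}

noncomputable def stateMarginal (P : S → A → S → ℝ) (π : S → A → ℝ) (ρ₀ : S → ℝ) (t : ℕ)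
    (s : S) : ℝ :=
  ∑ s₀, ρ₀ s₀ * visit P π t s₀ s

theorem stateMarginal_zero (s : S) : stateMarginal P π ρ₀ 0 s = ρ₀ s := by
  simp [stateMarginal, visit]

theorem stateMarginal_succ (t : ℕ) (s : S) :
    stateMarginal P π ρ₀ (t + 1) s =
      ∑ s'', stateMarginal P π ρ₀ t s'' * stepKernel P π s'' s := by
  simp only [stateMarginal, visit, mul_sum, sum_mul, mul_assoc]
  exact sum_comm

theorem stateMarginal_nonneg (hP : IsKernel P) (hπ : IsPolicy π) (hρ : ∀ s, 0 ≤ ρ₀ s)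
    (t : ℕ) (s : S) : 0 ≤ stateMarginal P π ρ₀ t s := by
  induction t generalizing s with
  | zero => simpa [stateMarginal_zero] using hρ s
  | succ t ih =>
    rw [stateMarginal_succ]
    exact sum_nonneg fun s'' _ => mul_nonneg (ih s'') (stepKernel_nonneg hP hπ s'' s)

theorem sum_stateMarginal (hP : IsKernel P) (hπ : IsPolicy π) (t : ℕ) :
    ∑ s, stateMarginal P π ρ₀ t s = ∑ s, ρ₀ s := by
  induction t with
  | zero => simp only [stateMarginal_zero]
  | succ t ih =>
    simp only [stateMarginal_succ]
    rw [sum_comm]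
    simpa only [← mul_sum, sum_stepKernel hP hπ, mul_one] using ih

theorem summable_discounted_stateMarginal (hP : IsKernel P) (hπ : IsPolicy π)
    (hρ : ∀ s, 0 ≤ ρ₀ s) {γ : ℝ} (hγ0 : 0 ≤ γ) (hγ1 : γ < 1) (s : S) :
    Summable fun t => γ ^ t * stateMarginal P π ρ₀ t s := by
  refine Summable.of_nonneg_of_le
    (fun t => mul_nonneg (pow_nonneg hγ0 t) (stateMarginal_nonneg hP hπ hρ t s))
    (fun t => ?_) ((summable_geometric_of_lt_one hγ0 hγ1).mul_right (∑ s', ρ₀ s'))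
  rw [← sum_stateMarginal hP hπ t]
  exact mul_le_mul_of_nonneg_left
    (single_le_sum (fun s' _ => stateMarginal_nonneg hP hπ hρ t s') (mem_univ s))
    (pow_nonneg hγ0 t)

theorem dvisit_eq_tsum (γ : ℝ) (s : S) :
    dvisit P γ ρ₀ π s = (1 - γ) * ∑' t, γ ^ t * stateMarginal P π ρ₀ t s :=
  rfl

theorem dvisit_nonneg (hP : IsKernel P) (hπ : IsPolicy π) (hρ : ∀ s, 0 ≤ ρ₀ s) {γ : ℝ}
    (hγ0 : 0 ≤ γ) (hγ1 : γ < 1) (s : S) : 0 ≤ dvisit P γ ρ₀ π s := by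
  rw [dvisit_eq_tsum]
  exact mul_nonneg (sub_nonneg.2 hγ1.le) <| tsum_nonneg fun t =>
    mul_nonneg (pow_nonneg hγ0 t) (stateMarginal_nonneg hP hπ hρ t s)

theorem dvisit_flow (hP : IsKernel P) (hπ : IsPolicy π) (hρ : ∀ s, 0 ≤ ρ₀ s) {γ : ℝ}
    (hγ0 : 0 ≤ γ) (hγ1 : γ < 1) (s : S) :
    dvisit P γ ρ₀ π s =
      (1 - γ) * ρ₀ s + γ * ∑ s'', dvisit P γ ρ₀ π s'' * stepKernel P π s'' s := by
  have hsum := summable_discounted_stateMarginal hP hπ hρ hγ0 hγ1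
  have hshift : ∑' t, γ ^ (t + 1) * stateMarginal P π ρ₀ (t + 1) s =
      γ * ∑ s'', (∑' t, γ ^ t * stateMarginal P π ρ₀ t s'') * stepKernel P π s'' s := by
    calc ∑' t, γ ^ (t + 1) * stateMarginal P π ρ₀ (t + 1) s
        = ∑' t, γ * ∑ s'', γ ^ t * stateMarginal P π ρ₀ t s'' * stepKernel P π s'' s := by
          simp only [stateMarginal_succ, mul_sum, pow_succ', mul_assoc]
      _ = γ * ∑ s'', ∑' t, γ ^ t * stateMarginal P π ρ₀ t s'' * stepKernel P π s'' s := by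
          rw [tsum_mul_left, Summable.tsum_finsetSum fun s'' _ => (hsum s'').mul_right _]
      _ = _ := by simp only [tsum_mul_right]
  simp only [dvisit_eq_tsum, (hsum s).tsum_eq_zero_add, hshift, pow_zero, one_mul,
    stateMarginal_zero, mul_sum]
  rw [mul_add, mul_sum]
  exact congrArg _ (sum_congr rfl fun _ _ => by ring)

end MDP

/-- **Visitation-shift bound (TRPO/CPO-style).** -/
theorem visitation_shift_bound {S A : Type*} [Fintype S] [DecidableEq S] [Fintype A]
    (P : S → A → S → ℝ) (γ : ℝ) (ρ₀ : S → ℝ) (π π' : S → A → ℝ)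
    (hP : IsKernel P) (hπ : IsPolicy π) (hπ' : IsPolicy π') (hρ : IsDist ρ₀)
    (hγ0 : 0 ≤ γ) (hγ1 : γ < 1) :
    ∑ s, |dvisit P γ ρ₀ π' s - dvisit P γ ρ₀ π s| ≤
      (2 * γ / (1 - γ)) * ∑ s, dvisit P γ ρ₀ π s * dtv (π' s) (π s) := by
  have hd := dvisit_nonneg hP hπ hρ.1 hγ0 hγ1
  have hshift := sum_abs_sub_le_of_flow (stepKernel_nonneg hP hπ') (sum_stepKernel hP hπ') hγ0 hd
    (dvisit_flow hP hπ hρ.1 hγ0 hγ1) (dvisit_flow hP hπ' hρ.1 hγ0 hγ1)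
  have htv : ∑ s, dvisit P γ ρ₀ π s * ∑ s', |stepKernel P π' s s' - stepKernel P π s s'| ≤
      2 * ∑ s, dvisit P γ ρ₀ π s * dtv (π' s) (π s) := by
    rw [mul_sum]
    refine sum_le_sum fun s _ => ?_
    rw [mul_left_comm]
    exact mul_le_mul_of_nonneg_left (sum_abs_stepKernel_sub_le hP π π' s) (hd s)
  rw [div_mul_eq_mul_div, le_div_iff₀ (sub_pos.2 hγ1)]
  nlinarith [mul_le_mul_of_nonneg_left htv hγ0]
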